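/- Let F be a field, α ∈ F with α ≠ 0 and α ≠ 1, r ≥ 2, n ≥ 1, p an n × n matrix over F, and A^i (for i ∈ Fin r) the parity matrices of Construction 2 built from p. Then for every x ∈ Fin r with x ≠ 0 and every block column index y ∈ Fin r with y ≠ 0, the (x, y) block of A^0 equals c_x times the (0, y) block of A^x, where c_x = α if 2x ≤ r and c_x = 1 otherwise. (This shows that, when the first parity node is erased, each of its row blocks x ≠ 0 can be rebuilt from row block 0 of the surviving parity node x together with the systematic elements indexed by the 0-th block column; hence accessing a 1/r fraction of the remaining elements suffices to rebuild a parity node.) -/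

import Mathlib

/-- The parity matrix `A^i` of Construction 2, built from the `n × n` matrix `p`
over a field, with blocks indexed by `Fin r × Fin r`. Writing `d = (x - i) mod r`,
the `(x, i)` block is `p ^ d`; for `x ≠ i` the `(x, x)` block is `β(x,i) • p ^ (r - d)`
where `β(x,i) = α` if (`2d < r`, or `2d = r` and `2i < r`) and `β(x,i) = 1` otherwise;
all other blocks are `0`. -/
def Ablock {F : Type*} [Field F] {r n : ℕ} (α : F)
    (p : Matrix (Fin n) (Fin n) F) (i : Fin r) :
    Matrix (Fin r × Fin n) (Fin r × Fin n) F :=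
  Matrix.of fun xa yb =>
    let d : ℕ := ((xa.1 : ℕ) + r - (i : ℕ)) % r
    if yb.1 = i then (p ^ d) xa.2 yb.2
    else if yb.1 = xa.1 then
      (if 2 * d < r ∨ (2 * d = r ∧ 2 * (i : ℕ) < r) then α else 1) *
        (p ^ (r - d)) xa.2 yb.2
    else 0

namespace Ablock

variable {F : Type*} [Field F] {r n : ℕ} (α : F) (p : Matrix (Fin n) (Fin n) F)

theorem apply_of_ne {i x y : Fin r} (hyi : y ≠ i) (hyx : y ≠ x) (a b : Fin n) :
    Ablock α p i (x, a) (y, b) = 0 := by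
  simp [Ablock, hyi, hyx]

variable [NeZero r]

theorem apply_zero_row_self {i : Fin r} (hi : i ≠ 0) (a b : Fin n) :
    Ablock α p i (0, a) (i, b) = (p ^ (r - i)) a b := by
  have hi' : 0 < (i : ℕ) := Fin.pos_iff_ne_zero.2 hi
  have hd : (0 + r - (i : ℕ)) % r = r - i := by
    rw [Nat.zero_add]
    exact Nat.mod_eq_of_lt (by omega)
  simp only [Ablock, Matrix.of_apply, if_pos, Fin.val_zero, hd]

theorem zero_apply_diag {x : Fin r} (hx : x ≠ 0) (a b : Fin n) :
    Ablock α p 0 (x, a) (x, b) = (if 2 * (x : ℕ) ≤ r then α else 1) * (p ^ (r - x)) a b := by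
  have hd : ((x : ℕ) + r - 0) % r = x := by simp [Nat.mod_eq_of_lt x.isLt]
  have hβ : (2 * (x : ℕ) < r ∨ 2 * (x : ℕ) = r ∧ 2 * 0 < r) ↔ 2 * (x : ℕ) ≤ r := by
    have := x.pos; omega
  simp only [Ablock, Matrix.of_apply, if_neg hx, if_pos, Fin.val_zero, hd, if_congr hβ rfl rfl]

end Ablock

/-- For every row block `x ≠ 0` and block column `y ≠ 0`, the
`(x, y)` block of `A^0` equals `c_x` times the `(0, y)` block of `A^x`, where
`c_x = α` if `2x ≤ r` and `c_x = 1` otherwise. Hence a parity node can be rebuilt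
by accessing a `1/r` fraction of the remaining elements. -/
theorem construction2_parity_rebuilding (F : Type*) [Field F]
    (α : F)
    (r n : ℕ) (hr : 2 ≤ r)
    (p : Matrix (Fin n) (Fin n) F) :
    haveI : NeZero r := ⟨by omega⟩
    ∀ x : Fin r, x ≠ 0 → ∀ y : Fin r, y ≠ 0 → ∀ (a b : Fin n),
      Ablock α p (0 : Fin r) (x, a) (y, b) =
        (if 2 * (x : ℕ) ≤ r then α else 1) * Ablock α p x ((0 : Fin r), a) (y, b) := by
  have : NeZero r := ⟨by omega⟩
  intro x hx y hy a b
  by_cases hyx : y = x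
  · subst hyx
    rw [Ablock.zero_apply_diag α p hx, Ablock.apply_zero_row_self α p hx]
  · rw [Ablock.apply_of_ne α p hy hyx, Ablock.apply_of_ne α p hyx hy, mul_zero]
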